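/- arXiv:1903.04113 — 6 statements merged into one kernel-verified Lean document; each statement's English description precedes it below -/
import Mathlib

section
/- A permutation p of {1,...,n} is sortable by one pass through a stack (i.e., s(p) is the identity) if and only if p avoids the pattern 231, i.e., there are no indices i < j < k with p(k) < p(i) < p(j). -/
/-- Auxiliary function: push `x` through the stack, popping all smaller entries
to the output. The stack is stored top-first. -/
def push (x : ℕ) : List ℕ → List ℕ → List ℕ × List ℕ
  | [], out => ([x], out)
  | t :: s, out => if t < x then push x s (out ++ [t]) else (x :: t :: s, out)

def sortAux : List ℕ → List ℕ → List ℕ → List ℕ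
  | [], stack, out => out ++ stack
  | x :: xs, stack, out =>
      let r := push x stack out
      sortAux xs r.1 r.2

/-- The stack sorting map `s`: it satisfies `s(∅) = ∅` and `s(L n R) = s(L) s(R) n`
where `n` is the maximal entry. -/
def stackSort (p : List ℕ) : List ℕ := sortAux p [] []

/-!
During a pass the stack, read from the top, is weakly increasing. If `b` is followed later by a
larger `c`, then `b` is popped at the latest when `c` arrives, so it is output before every entry
that comes after `c`: a 231 pattern `b c a` puts `b` in front of the smaller `a`.

Conversely, an entry `t` popped by an incoming `x > t` is at most every later entry `y`, since
`y < t` would make `t x y` a 231 pattern. The invariant carrying this is that the stack, read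
bottom to top, followed by the unread input still avoids 231; then every popped entry is at most
everything still on the stack or unread, and the output is sorted.
-/

open List

def Contains231 (l : List ℕ) : Prop :=
  ∃ a b c : ℕ, a < b ∧ b < c ∧ [b, c, a] <+ l

theorem Contains231.mono {l₁ l₂ : List ℕ} (h : l₁ <+ l₂) : Contains231 l₁ → Contains231 l₂
  | ⟨a, b, c, hab, hbc, hs⟩ => ⟨a, b, c, hab, hbc, hs.trans h⟩

theorem contains231_iff_getD (p : List ℕ) :
    Contains231 p ↔ ∃ i j k : ℕ, i < j ∧ j < k ∧ k < p.length ∧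
        p.getD k 0 < p.getD i 0 ∧ p.getD i 0 < p.getD j 0 := by
  constructor
  · rintro ⟨a, b, c, hab, hbc, hbca⟩
    obtain ⟨is, his, hmono⟩ := sublist_eq_map_getElem hbca
    match is, his, hmono with
    | [i, j, k], his, hmono =>
      simp only [map_cons, map_nil, cons.injEq, and_true] at his
      obtain ⟨rfl, rfl, rfl⟩ := his
      simp only [pairwise_cons, mem_cons, not_mem_nil] at hmono
      refine ⟨i, j, k, ?_, ?_, k.isLt, ?_⟩ <;> simp_all
  · rintro ⟨i, j, k, hij, hjk, hk, hki, hij'⟩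
    have hj : j < p.length := hjk.trans hk
    have hi : i < p.length := hij.trans hj
    refine ⟨p[k], p[i], p[j], ?_, ?_, ?_⟩
    · simpa [getD_eq_getElem, hi, hk] using hki
    · simpa [getD_eq_getElem, hi, hj] using hij'
    · simpa using map_getElem_sublist (l := p) (is := [⟨i, hi⟩, ⟨j, hj⟩, ⟨k, hk⟩])
        (by simp [hij, hjk, hij.trans hjk])

section SortedStack

variable {α : Type*} [LinearOrder α] {s : List α}

theorem le_of_mem_dropWhile_lt (hs : s.Pairwise (· ≤ ·)) {x y : α}
    (hy : y ∈ s.dropWhile (· < x)) : x ≤ y := by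
  induction s with
  | nil => simp at hy
  | cons t s ih =>
    by_cases h : t < x
    · exact ih hs.of_cons (by simpa [dropWhile_cons, h] using hy)
    · simp only [dropWhile_cons, h, decide_false] at hy
      rcases mem_cons.1 hy with rfl | hy
      · exact not_lt.1 h
      · exact (not_lt.1 h).trans (rel_of_pairwise_cons hs hy)

theorem pairwise_cons_dropWhile_lt (hs : s.Pairwise (· ≤ ·)) (x : α) :
    (x :: s.dropWhile (· < x)).Pairwise (· ≤ ·) :=
  pairwise_cons.2 ⟨fun _ => le_of_mem_dropWhile_lt hs, hs.sublist (dropWhile_sublist _)⟩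

theorem mem_takeWhile_lt_of_lt (hs : s.Pairwise (· ≤ ·)) {b c : α} (hb : b ∈ s) (hbc : b < c) :
    b ∈ s.takeWhile (· < c) := by
  induction s with
  | nil => simp at hb
  | cons t s ih =>
    rcases mem_cons.1 hb with rfl | hb
    · simp [hbc]
    · have htc : t < c := (rel_of_pairwise_cons hs hb).trans_lt hbc
      simp only [takeWhile_cons, htc, decide_true, if_true]
      exact mem_cons_of_mem _ (ih hs.of_cons hb)

end SortedStack

theorem sortAux_cons (x : ℕ) (xs stack out : List ℕ) :
    sortAux (x :: xs) stack out
      = sortAux xs (x :: stack.dropWhile (· < x)) (out ++ stack.takeWhile (· < x)) := by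
  suffices ∀ out, push x stack out =
      (x :: stack.dropWhile (· < x), out ++ stack.takeWhile (· < x)) by
    rw [sortAux, this]
  induction stack with
  | nil => simp [push]
  | cons t s ih => by_cases h : t < x <;> simp [push, h, ih]

theorem sortAux_append_out (xs stack o₁ o₂ : List ℕ) :
    sortAux xs stack (o₁ ++ o₂) = o₁ ++ sortAux xs stack o₂ := by
  induction xs generalizing stack o₂ with
  | nil => simp [sortAux]
  | cons x xs ih => rw [sortAux_cons, sortAux_cons, append_assoc, ih]

theorem sortAux_perm (xs stack out : List ℕ) : sortAux xs stack out ~ out ++ stack ++ xs := by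
  induction xs generalizing stack out with
  | nil => simp [sortAux]
  | cons x xs ih =>
    rw [sortAux_cons]
    refine (ih _ _).trans ?_
    have hmiddle (T D : List ℕ) : out ++ T ++ x :: D ++ xs ~ out ++ (T ++ D) ++ x :: xs := by
      simpa using (perm_middle.symm.append_left T).append_left out
    exact (hmiddle _ _).trans (by rw [takeWhile_append_dropWhile])

theorem stackSort_perm (p : List ℕ) : stackSort p ~ p := by
  simpa [stackSort] using sortAux_perm p [] []

theorem pairwise_sortAux_of_not_contains231 {xs stack out : List ℕ}
    (hsorted : (out ++ stack).Pairwise (· ≤ ·)) (hout : ∀ b ∈ out, ∀ y ∈ xs, b ≤ y)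
    (hfree : ¬ Contains231 (stack.reverse ++ xs)) :
    (sortAux xs stack out).Pairwise (· ≤ ·) := by
  induction xs generalizing stack out with
  | nil => simpa [sortAux] using hsorted
  | cons x xs ih =>
    rw [sortAux_cons]
    set T := stack.takeWhile (· < x)
    set D := stack.dropWhile (· < x)
    have hTD : T ++ D = stack := takeWhile_append_dropWhile
    have hstack : stack.Pairwise (· ≤ ·) := hsorted.sublist (sublist_append_right _ _)
    have hTx : ∀ t ∈ T, t < x := fun t ht => by simpa using mem_takeWhile_imp ht
    have hxD : ∀ d ∈ D, x ≤ d := fun d hd => le_of_mem_dropWhile_lt hstack hd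
    have hTxs : ∀ t ∈ T, ∀ y ∈ xs, t ≤ y := by
      intro t ht y hy
      by_contra! hyt
      refine hfree ⟨y, t, x, hyt, hTx t ht, ?_⟩
      have ht' : [t] <+ stack.reverse := by simpa using (takeWhile_sublist _).subset ht
      exact ht'.append ((singleton_sublist.2 hy).cons_cons x)
    apply ih
    · rw [← hTD, ← append_assoc] at hsorted
      simp only [pairwise_append, pairwise_cons, mem_append] at hsorted ⊢
      grind
    · intro b hb y hy
      rcases mem_append.1 hb with hb | hb
      · exact hout b hb y (mem_cons_of_mem _ hy)
      · exact hTxs b hb y hy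
    · refine fun h => hfree (h.mono ?_)
      simpa using (dropWhile_sublist _).reverse.append_right (x :: xs)

theorem sublist_sortAux_of_mem_out {xs stack out : List ℕ} {a b : ℕ} (hb : b ∈ out)
    (ha : a ∈ xs) : [b, a] <+ sortAux xs stack out := by
  rw [← append_nil out, sortAux_append_out]
  exact (singleton_sublist.2 hb).append
    (singleton_sublist.2 ((sortAux_perm xs stack []).mem_iff.2 (by simp [ha])))

theorem sublist_sortAux_of_mem_of_lt {xs stack out : List ℕ} {a b c : ℕ}
    (hstack : stack.Pairwise (· ≤ ·)) (hb : b ∈ out ++ stack) (hbc : b < c) (hca : [c, a] <+ xs) :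
    [b, a] <+ sortAux xs stack out := by
  induction xs generalizing stack out with
  | nil => simp at hca
  | cons x xs ih =>
    rw [sortAux_cons]
    cases hca with
    | cons _ hca =>
      refine ih (pairwise_cons_dropWhile_lt hstack x) ?_ hca
      rw [← takeWhile_append_dropWhile (p := (· < x)) (l := stack)] at hb
      simp only [mem_append, mem_cons] at hb ⊢
      tauto
    | cons_cons _ hca =>
      refine sublist_sortAux_of_mem_out ?_ (singleton_sublist.1 hca)
      rcases mem_append.1 hb with hb | hb
      · exact mem_append_left _ hb
      · exact mem_append_right _ (mem_takeWhile_lt_of_lt hstack hb hbc)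

theorem sublist_sortAux_of_sublist_of_lt {xs stack out : List ℕ} {a b c : ℕ}
    (hstack : stack.Pairwise (· ≤ ·)) (hbca : [b, c, a] <+ xs) (hbc : b < c) :
    [b, a] <+ sortAux xs stack out := by
  induction xs generalizing stack out with
  | nil => simp at hbca
  | cons x xs ih =>
    rw [sortAux_cons]
    cases hbca with
    | cons _ hbca => exact ih (pairwise_cons_dropWhile_lt hstack x) hbca
    | cons_cons _ hca =>
      exact sublist_sortAux_of_mem_of_lt (pairwise_cons_dropWhile_lt hstack _) (by simp) hbc hca

theorem pairwise_le_stackSort_iff (p : List ℕ) :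
    (stackSort p).Pairwise (· ≤ ·) ↔ ¬ Contains231 p := by
  refine ⟨fun hsorted ⟨a, b, c, hab, hbc, hbca⟩ => ?_, fun hfree => ?_⟩
  · have hba := sublist_sortAux_of_sublist_of_lt (stack := []) (out := []) Pairwise.nil hbca hbc
    exact hab.not_ge (rel_of_pairwise_cons (hsorted.sublist hba) (mem_singleton_self a))
  · exact pairwise_sortAux_of_not_contains231 Pairwise.nil (by simp) (by simpa using hfree)

/-- A permutation `p` of `{1, …, n}` (in one-line notation, as a list) is stack
sortable iff it avoids the pattern 231: there are no `i < j < k` with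
`p(k) < p(i) < p(j)`. -/
theorem stmt_1 (n : ℕ) (p : List ℕ) (hp : p.Perm (List.range' 1 n)) :
    stackSort p = List.range' 1 n ↔
      ¬ ∃ i j k : ℕ, i < j ∧ j < k ∧ k < p.length ∧
        p.getD k 0 < p.getD i 0 ∧ p.getD i 0 < p.getD j 0 := by
  rw [← contains231_iff_getD, ← pairwise_le_stackSort_iff]
  refine ⟨fun h => h ▸ pairwise_le_range', fun h => ?_⟩
  exact ((stackSort_perm p).trans hp).eq_of_pairwise (fun _ _ _ _ => le_antisymm) h
    pairwise_le_range'
end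

section
/- The number of 231-avoiding permutations of length n equals the Catalan number C_n = (1/(n+1)) * binomial(2n, n). -/
/-!
If `p` avoids 231 and its maximum stands at position `m`, every entry left of the maximum is
smaller than every entry right of it: otherwise the two entries and the maximum form a 231. So the
entries left of the maximum are `0, …, m - 1` and those right of it are `m, …, n - 1`, each block
again avoiding 231; conversely any two 231-avoiding blocks glue around the maximum to a
231-avoiding permutation. Summing over `m` gives `C (n + 1) = ∑ m, C m * C (n - m)`.
-/

open Finset Function Equiv

section Avoids231

variable {α α' β γ : Type*}

def Avoids231 [LT α] [LT β] (f : α → β) : Prop :=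
  ¬ ∃ i j k, i < j ∧ j < k ∧ f k < f i ∧ f i < f j

instance [Fintype α] [LT α] [LT β] [DecidableRel (α := α) (· < ·)]
    [DecidableRel (α := β) (· < ·)] (f : α → β) : Decidable (Avoids231 f) :=
  inferInstanceAs (Decidable (¬ ∃ _ _ _, _))

theorem Avoids231.comp_strictMono [Preorder α] [Preorder α'] [LT β] {f : α → β}
    (hf : Avoids231 f) {e : α' → α} (he : StrictMono e) : Avoids231 (f ∘ e) :=
  fun ⟨i, j, k, hij, hjk, h⟩ => hf ⟨e i, e j, e k, he hij, he hjk, h⟩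

theorem StrictMono.avoids231_comp_iff [LT α] [LinearOrder β] [Preorder γ] {g : β → γ}
    (hg : StrictMono g) {f : α → β} : Avoids231 (g ∘ f) ↔ Avoids231 f := by
  simp only [Avoids231, comp_apply, hg.lt_iff_lt]

theorem Avoids231.lt_of_lt_of_lt [LinearOrder α] [LinearOrder β] {f : α → β}
    (hf : Avoids231 f) (hinj : Injective f) {m : α} (hmax : ∀ x, f x ≤ f m) {i k : α}
    (hi : i < m) (hk : m < k) : f i < f k := by
  by_contra! h
  exact hf ⟨i, m, k, hi, hk, h.lt_of_ne (hinj.ne (hi.trans hk).ne'),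
    (hmax i).lt_of_ne (hinj.ne hi.ne)⟩

theorem avoids231_of_blocks [LinearOrder α] [LinearOrder β] {f : α → β} {m : α}
    (hleft : Avoids231 fun x : {x // x < m} => f x)
    (hright : Avoids231 fun x : {x // m < x} => f x)
    (hmax : ∀ x, f x ≤ f m) (hcross : ∀ i k, i < m → m < k → f i < f k) : Avoids231 f := by
  rintro ⟨i, j, k, hij, hjk, hki, hij'⟩
  rcases lt_trichotomy k m with hk | rfl | hk
  · exact hleft ⟨⟨i, hij.trans (hjk.trans hk)⟩, ⟨j, hjk.trans hk⟩, ⟨k, hk⟩, hij, hjk, hki, hij'⟩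
  · exact (hmax i).not_gt hki
  rcases lt_trichotomy i m with hi | rfl | hi
  · exact (hcross i k hi hk).not_gt hki
  · exact (hmax j).not_gt hij'
  · exact hright ⟨⟨i, hi⟩, ⟨j, hi.trans hij⟩, ⟨k, hk⟩, hij, hjk, hki, hij'⟩

end Avoids231

section Fin

variable {N : ℕ}

-- The values below `p i` all sit left of `m` and differ from `p i`, so there are fewer than `m`.
theorem Equiv.Perm.val_apply_lt_of_lt (p : Perm (Fin N)) {m : Fin N} (hmax : ∀ x, p x ≤ p m)
    (hcross : ∀ i k, i < m → m < k → p i < p k) {i : Fin N} (hi : i < m) : (p i : ℕ) < m := by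
  have hmaps : Set.MapsTo p.symm (Iio (p i)) ((Iio m).erase i) := by
    intro v hv
    simp only [coe_Iio, Set.mem_Iio, coe_erase, Set.mem_sdiff, Set.mem_singleton_iff] at hv ⊢
    refine ⟨?_, fun h => by simp [← h] at hv⟩
    rcases lt_trichotomy (p.symm v) m with h | h | h
    · exact h
    · exact absurd (hmax i) (by simpa [← h] using hv)
    · exact absurd (hcross i _ hi h) (by simpa using hv.not_gt)
  calc (p i : ℕ) = #(Iio (p i)) := (Fin.card_Iio _).symm
    _ ≤ #((Iio m).erase i) := card_le_card_of_injOn _ hmaps p.symm.injective.injOn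
    _ < m := by rw [card_erase_of_mem (by simpa), Fin.card_Iio]; omega

theorem le_val_apply_of_forall_lt {N' : ℕ} {f : Fin N → Fin N'} (hf : Injective f) {m k : Fin N}
    (hcross : ∀ i, i < m → f i < f k) : (m : ℕ) ≤ f k :=
  calc (m : ℕ) = #(Iio m) := (Fin.card_Iio _).symm
    _ ≤ #(Iio (f k)) :=
      card_le_card_of_injOn f (fun i hi => by simpa using hcross i (by simpa using hi)) hf.injOn
    _ = f k := Fin.card_Iio _

end Fin

section GlueAroundMax

variable {n : ℕ}

-- `q`, then the maximum `n` at position `m`, then `r` shifted up by `m`.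
def glueAroundMax (m : Fin (n + 1)) (q : Perm (Fin m)) (r : Perm (Fin (n - m))) :
    Perm (Fin (n + 1)) where
  toFun i :=
    if h : (i : ℕ) < m then Fin.castLE Fin.is_le' (q ⟨i, h⟩)
    else if h' : (i : ℕ) = m then Fin.last n
    else Fin.castLE (by omega) (Fin.natAdd m (r ⟨i - (m + 1), by omega⟩))
  invFun v :=
    if h : (v : ℕ) < m then Fin.castLE Fin.is_le' (q.symm ⟨v, h⟩)
    else if h' : (v : ℕ) = n then m
    else Fin.castLE (by omega) (Fin.natAdd (m + 1) (r.symm ⟨v - m, by omega⟩))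
  left_inv i := by
    ext
    by_cases h : (i : ℕ) < m
    · simp [h]
    by_cases h' : (i : ℕ) = m
    · simp [h', show ¬ n < m by omega]
    · have := (r ⟨i - (m + 1), by omega⟩).isLt
      simp [h, h', show (m : ℕ) + r ⟨i - (m + 1), by omega⟩ ≠ n by omega]
      omega
  right_inv v := by
    ext
    by_cases h : (v : ℕ) < m
    · simp [h]
    by_cases h' : (v : ℕ) = n
    · simp [h', show ¬ n < m by omega]
    · simp only [h, h', dite_false]
      rw [dif_neg (by simp; omega), dif_neg (by simp; omega)]
      simp
      omega

variable {m : Fin (n + 1)} {q : Perm (Fin m)} {r : Perm (Fin (n - m))}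

theorem glueAroundMax_of_lt {i : Fin (n + 1)} (h : i < m) :
    glueAroundMax m q r i = Fin.castLE Fin.is_le' (q ⟨i, h⟩) := by
  simp [glueAroundMax, h]

theorem glueAroundMax_self : glueAroundMax m q r m = Fin.last n := by
  simp [glueAroundMax]

theorem val_glueAroundMax_of_gt {i : Fin (n + 1)} (h : m < i) :
    (glueAroundMax m q r i : ℕ) = m + r ⟨i - (m + 1), by omega⟩ := by
  simp [glueAroundMax, h.not_gt, Fin.val_ne_of_ne h.ne']

theorem avoids231_glueAroundMax (hq : Avoids231 q) (hr : Avoids231 r) :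
    Avoids231 (glueAroundMax m q r) := by
  refine avoids231_of_blocks (m := m) ?_ ?_ ?_ ?_
  · have : (fun x : {x : Fin (n + 1) // x < m} => glueAroundMax m q r x) =
        Fin.castLE Fin.is_le' ∘ q ∘ fun x : {x : Fin (n + 1) // x < m} => (⟨x, x.2⟩ : Fin m) :=
      funext fun x => glueAroundMax_of_lt x.2
    rw [this]
    exact ((Fin.strictMono_castLE _).avoids231_comp_iff.mpr hq).comp_strictMono fun x y h => h
  · rw [← Fin.val_strictMono.avoids231_comp_iff]
    have : (Fin.val ∘ fun x : {x : Fin (n + 1) // m < x} => glueAroundMax m q r x) =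
        ((m : ℕ) + ·) ∘ Fin.val ∘ r ∘
          fun x : {x : Fin (n + 1) // m < x} => (⟨x.1 - (m + 1), by omega⟩ : Fin (n - m)) :=
      funext fun x => val_glueAroundMax_of_gt x.2
    rw [this]
    have hr' : Avoids231 (((m : ℕ) + ·) ∘ Fin.val ∘ r) :=
      (add_right_strictMono.comp Fin.val_strictMono).avoids231_comp_iff.mpr hr
    refine hr'.comp_strictMono fun x y (h : x.1 < y.1) => ?_
    have := x.2
    simp only [Fin.lt_def] at h this ⊢
    omega
  · simp [glueAroundMax_self, Fin.le_last]
  · intro i k hi hk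
    rw [Fin.lt_def, glueAroundMax_of_lt hi, val_glueAroundMax_of_gt hk]
    simp
    omega

theorem Avoids231.apply_lt_apply_of_eq_last {p : Perm (Fin (n + 1))} (hp : Avoids231 p)
    (hm : p m = Fin.last n) {i k : Fin (n + 1)} (hi : i < m) (hk : m < k) : p i < p k :=
  hp.lt_of_lt_of_lt p.injective (fun _ => hm ▸ Fin.le_last _) hi hk

theorem Avoids231.val_apply_lt_of_lt {p : Perm (Fin (n + 1))} (hp : Avoids231 p)
    (hm : p m = Fin.last n) {i : Fin (n + 1)} (hi : i < m) : (p i : ℕ) < m :=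
  p.val_apply_lt_of_lt (fun _ => hm ▸ Fin.le_last _)
    (fun _ _ => hp.apply_lt_apply_of_eq_last hm) hi

theorem Avoids231.val_apply_mem_Ico_of_gt {p : Perm (Fin (n + 1))} (hp : Avoids231 p)
    (hm : p m = Fin.last n) {k : Fin (n + 1)} (hk : m < k) : (p k : ℕ) ∈ Set.Ico (m : ℕ) n :=
  ⟨le_val_apply_of_forall_lt p.injective fun _ hi => hp.apply_lt_apply_of_eq_last hm hi hk,
    Fin.val_lt_last (hm ▸ p.injective.ne hk.ne')⟩

theorem exists_glueAroundMax_eq {p : Perm (Fin (n + 1))} (hp : Avoids231 p)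
    (hm : p m = Fin.last n) :
    ∃ (q : Perm (Fin m)) (r : Perm (Fin (n - m))),
      Avoids231 q ∧ Avoids231 r ∧ glueAroundMax m q r = p := by
  let right (b : Fin (n - m)) : Fin (n + 1) := ⟨m + 1 + b, by omega⟩
  have hleft (a : Fin m) : (p (Fin.castLE Fin.is_le' a) : ℕ) < m := hp.val_apply_lt_of_lt hm a.2
  have hright (b) : (p (right b) : ℕ) ∈ Set.Ico (m : ℕ) n :=
    hp.val_apply_mem_Ico_of_gt hm (Fin.lt_def.mpr (by simp [right]; omega))
  let q : Perm (Fin m) := .ofBijective (fun a => ⟨p (Fin.castLE _ a), hleft a⟩) <|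
    Finite.injective_iff_bijective.mp fun a a' h =>
      Fin.castLE_injective _ (p.injective (Fin.ext (Fin.mk.inj h)))
  let r : Perm (Fin (n - m)) := .ofBijective (fun b => ⟨p (right b) - m, by grind⟩) <|
    Finite.injective_iff_bijective.mp fun b b' h => by
      have := Fin.mk.inj h
      have : p (right b) = p (right b') := Fin.ext (by grind)
      simpa [right, Fin.ext_iff] using p.injective this
  refine ⟨q, r, ?_, ?_, ?_⟩
  · rw [← Fin.val_strictMono.avoids231_comp_iff]
    exact Fin.val_strictMono.avoids231_comp_iff.mpr (hp.comp_strictMono (Fin.strictMono_castLE _))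
  · rw [← (add_right_strictMono.comp Fin.val_strictMono).avoids231_comp_iff, comp_assoc,
      show ((m : ℕ) + ·) ∘ Fin.val ∘ r = Fin.val ∘ p ∘ right from funext fun b => by grind]
    exact Fin.val_strictMono.avoids231_comp_iff.mpr
      (hp.comp_strictMono fun b b' (h : (b : ℕ) < b') =>
        show (m : ℕ) + 1 + b < m + 1 + b' by omega)
  · ext i : 1
    rcases lt_trichotomy i m with hi | rfl | hi
    · rw [glueAroundMax_of_lt hi]
      rfl
    · rw [glueAroundMax_self, hm]
    · have hi' := Fin.lt_def.mp hi
      have hidx : right ⟨i - (m + 1), by omega⟩ = i := Fin.ext (by simp [right]; omega)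
      have := hright ⟨i - (m + 1), by omega⟩
      ext
      rw [val_glueAroundMax_of_gt hi]
      simp only [r, Equiv.ofBijective_apply, hidx, Set.mem_Ico] at this ⊢
      omega

theorem glueAroundMax_inj {q' : Perm (Fin m)} {r' : Perm (Fin (n - m))} :
    glueAroundMax m q r = glueAroundMax m q' r' ↔ q = q' ∧ r = r' := by
  refine ⟨fun h => ⟨?_, ?_⟩, fun ⟨hq, hr⟩ => hq ▸ hr ▸ rfl⟩
  · refine Equiv.ext fun a => ?_
    have := congrArg (· (Fin.castLE Fin.is_le' a)) h
    simp only [glueAroundMax_of_lt (show Fin.castLE Fin.is_le' a < m from a.2)] at this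
    simpa using Fin.castLE_injective _ this
  · ext b
    have hb : m < (⟨m + 1 + b, by omega⟩ : Fin (n + 1)) := by
      rw [Fin.lt_def]; simp; omega
    have := congrArg (fun p : Perm (Fin (n + 1)) => (p ⟨m + 1 + b, by omega⟩ : ℕ)) h
    simp only [val_glueAroundMax_of_gt hb] at this
    simpa using this

end GlueAroundMax

theorem card_avoids231_symm_last_eq {n : ℕ} (m : Fin (n + 1)) :
    #{p : Perm (Fin (n + 1)) | Avoids231 p ∧ p.symm (Fin.last n) = m} =
      #{q : Perm (Fin m) | Avoids231 q} * #{r : Perm (Fin (n - m)) | Avoids231 r} := by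
  rw [← card_product]
  refine (card_bij (fun qr _ => glueAroundMax m qr.1 qr.2) ?_ ?_ ?_).symm
  · rintro ⟨q, r⟩ hqr
    simp only [mem_product, mem_filter_univ] at hqr
    simpa [Equiv.symm_apply_eq, glueAroundMax_self] using avoids231_glueAroundMax hqr.1 hqr.2
  · rintro ⟨q, r⟩ - ⟨q', r'⟩ - h
    simpa using glueAroundMax_inj.mp h
  · intro p hp
    simp only [mem_filter_univ, Equiv.symm_apply_eq] at hp
    obtain ⟨q, r, hq, hr, rfl⟩ := exists_glueAroundMax_eq hp.1 hp.2.symm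
    exact ⟨(q, r), by simp [hq, hr], rfl⟩

theorem card_avoids231 (n : ℕ) : #{p : Perm (Fin n) | Avoids231 p} = catalan n := by
  induction n using Nat.strong_induction_on with
  | _ n ih =>
  cases n with
  | zero => simp [Avoids231]
  | succ n =>
    rw [card_eq_sum_card_fiberwise (f := fun p => p.symm (Fin.last n)) (t := univ)
      (fun _ _ => mem_univ _), catalan_succ]
    refine sum_congr rfl fun m _ => ?_
    rw [filter_filter, card_avoids231_symm_last_eq, ih m (by omega), ih (n - m) (by omega)]

/-- The number of 231-avoiding permutations of `{1, …, n}` equals the `n`-th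
Catalan number. A permutation `p` avoids 231 iff there are no indices
`i < j < k` with `p(k) < p(i) < p(j)`. -/
theorem stmt_2 (n : ℕ) :
    ((Finset.univ : Finset (Equiv.Perm (Fin n))).filter (fun p =>
        ¬ ∃ i j k : Fin n, i < j ∧ j < k ∧ p k < p i ∧ p i < p j)).card
      = catalan n := by
  convert card_avoids231 n
end

section
/- For every permutation p of length n ≥ 1, applying the stack sorting map n−1 times yields the identity: s^{n−1}(p) = identity. In particular every permutation of length n is (n−1)-stack sortable. -/
/-!
The stack machine satisfies the recursion `s(L m R) = s(L) s(R) m` for `m` maximal, so `s`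
moves the maximum of a permutation to the end and permutes the remaining entries. Since
`s^k(q m) = s^k(q) m` when `m` exceeds every entry of `q`, induction on the length shows that
`n - 1` passes sort a permutation of length `n`.
-/

namespace StackSort

theorem push_perm (x : ℕ) (st out : List ℕ) :
    ((push x st out).2 ++ (push x st out).1).Perm (out ++ st ++ [x]) := by
  induction st generalizing out with
  | nil => simp [push]
  | cons t s ih =>
    by_cases h : t < x
    · simp only [push, if_pos h]
      exact (ih (out ++ [t])).trans (by simp)
    · simp only [push, if_neg h]
      exact ((List.perm_append_singleton x (t :: s)).symm.append_left out).trans (by simp)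

theorem push_fst_subset (x : ℕ) (st out : List ℕ) : (push x st out).1 ⊆ x :: st := by
  induction st generalizing out with
  | nil => simp [push]
  | cons t s ih =>
    by_cases h : t < x
    · simp only [push, if_pos h]
      exact List.Subset.trans (ih _) (List.cons_subset_cons x (List.subset_cons_self t s))
    · simp [push, if_neg h]

theorem push_eq_of_forall_lt {x : ℕ} {st : List ℕ} (out : List ℕ) (hst : ∀ t ∈ st, t < x) :
    push x st out = ([x], out ++ st) := by
  induction st generalizing out with
  | nil => simp [push]
  | cons t s ih =>
    simp only [List.mem_cons, forall_eq_or_imp] at hst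
    simp [push, if_pos hst.1, ih (out ++ [t]) hst.2]

theorem push_eq_append_snd (x : ℕ) (st out : List ℕ) :
    push x st out = ((push x st []).1, out ++ (push x st []).2) := by
  induction st generalizing out with
  | nil => simp [push]
  | cons t s ih =>
    by_cases h : t < x
    · simp [push, if_pos h, ih (out ++ [t]), ih [t]]
    · simp [push, if_neg h]

theorem push_append_singleton {x m : ℕ} {st : List ℕ} (out : List ℕ) (hx : x < m)
    (hst : ∀ t ∈ st, t < m) :
    push x (st ++ [m]) out = ((push x st out).1 ++ [m], (push x st out).2) := by
  induction st generalizing out with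
  | nil => simp [push, Nat.not_lt.mpr hx.le]
  | cons t s ih =>
    simp only [List.mem_cons, forall_eq_or_imp] at hst
    by_cases h : t < x
    · simp only [List.cons_append, push, if_pos h]
      exact ih _ hst.2
    · simp [push, if_neg h]

theorem forall_mem_push_fst_lt {x m : ℕ} {st : List ℕ} (out : List ℕ) (hx : x < m)
    (hst : ∀ t ∈ st, t < m) : ∀ t ∈ (push x st out).1, t < m := by
  intro t ht
  rcases List.mem_cons.mp (push_fst_subset x st out ht) with rfl | ht
  exacts [hx, hst t ht]

theorem sortAux_perm (xs st out : List ℕ) : (sortAux xs st out).Perm (out ++ st ++ xs) := by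
  induction xs generalizing st out with
  | nil => simp [sortAux]
  | cons x xs ih =>
    exact (ih _ _).trans (((push_perm x st out).append_right xs).trans (by simp))

theorem sortAux_eq_append (xs st out : List ℕ) : sortAux xs st out = out ++ sortAux xs st [] := by
  induction xs generalizing st out with
  | nil => simp [sortAux]
  | cons x xs ih =>
    simp only [sortAux]
    rw [push_eq_append_snd x st out, ih, ih _ (push x st []).2, List.append_assoc]

theorem sortAux_append_singleton_stack {m : ℕ} {xs st : List ℕ} (out : List ℕ)
    (hxs : ∀ y ∈ xs, y < m) (hst : ∀ t ∈ st, t < m) :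
    sortAux xs (st ++ [m]) out = sortAux xs st out ++ [m] := by
  induction xs generalizing st out with
  | nil => simp [sortAux]
  | cons x xs ih =>
    simp only [List.mem_cons, forall_eq_or_imp] at hxs
    simp only [sortAux, push_append_singleton out hxs.1 hst]
    exact ih _ hxs.2 (forall_mem_push_fst_lt out hxs.1 hst)

/-- Reading a new maximum empties the stack onto the output and leaves only the maximum on it. -/
theorem sortAux_append_cons_of_forall_lt {m : ℕ} {xs st : List ℕ} (ys out : List ℕ)
    (hxs : ∀ y ∈ xs, y < m) (hst : ∀ t ∈ st, t < m) :
    sortAux (xs ++ m :: ys) st out = sortAux ys [m] (sortAux xs st out) := by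
  induction xs generalizing st out with
  | nil => simp [sortAux, push_eq_of_forall_lt out hst]
  | cons x xs ih =>
    simp only [List.mem_cons, forall_eq_or_imp] at hxs
    exact ih _ hxs.2 (forall_mem_push_fst_lt out hxs.1 hst)

theorem stackSort_perm (p : List ℕ) : (stackSort p).Perm p := by
  simpa [stackSort] using sortAux_perm p [] []

theorem stackSort_append_cons_of_forall_lt {m : ℕ} {L R : List ℕ} (hL : ∀ y ∈ L, y < m)
    (hR : ∀ y ∈ R, y < m) :
    stackSort (L ++ m :: R) = stackSort L ++ stackSort R ++ [m] := by
  calc stackSort (L ++ m :: R) = sortAux R [m] (stackSort L) :=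
        sortAux_append_cons_of_forall_lt R [] hL (by simp)
    _ = sortAux R [] (stackSort L) ++ [m] := by
        simpa using sortAux_append_singleton_stack (stackSort L) hR (st := []) (by simp)
    _ = stackSort L ++ stackSort R ++ [m] := by rw [sortAux_eq_append]; rfl

theorem stackSort_iterate_append_singleton {m : ℕ} (k : ℕ) {q : List ℕ}
    (hq : ∀ y ∈ q, y < m) : stackSort^[k] (q ++ [m]) = stackSort^[k] q ++ [m] := by
  induction k generalizing q with
  | zero => rfl
  | succ k ih =>
    have hsort : stackSort (q ++ [m]) = stackSort q ++ [m] := by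
      simpa [show stackSort [] = [] from rfl] using
        stackSort_append_cons_of_forall_lt hq (R := []) (by simp)
    rw [Function.iterate_succ_apply, Function.iterate_succ_apply, hsort]
    exact ih fun y hy => hq y ((stackSort_perm q).subset hy)

theorem exists_stackSort_eq_append_singleton {m : ℕ} {p l : List ℕ} (hp : p.Perm (l ++ [m]))
    (hl : ∀ y ∈ l, y < m) : ∃ q, q.Perm l ∧ stackSort p = q ++ [m] := by
  obtain ⟨L, R, rfl⟩ := List.append_of_mem (a := m) (hp.mem_iff.mpr (by simp))
  have hLR : (L ++ R).Perm l := by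
    refine (List.perm_append_right_iff [m]).mp (List.Perm.trans ?_ hp)
    simpa using ((List.perm_append_singleton m R).symm.append_left L).symm
  have hbound : ∀ y ∈ L ++ R, y < m := fun y hy => hl y (hLR.subset hy)
  refine ⟨stackSort L ++ stackSort R, ((stackSort_perm L).append (stackSort_perm R)).trans hLR,
    stackSort_append_cons_of_forall_lt ?_ ?_⟩
  exacts [fun y hy => hbound y (by simp [hy]), fun y hy => hbound y (by simp [hy])]

theorem stackSort_iterate_of_perm_range' (a n : ℕ) {p : List ℕ}
    (hp : p.Perm (List.range' a (n + 1))) : stackSort^[n] p = List.range' a (n + 1) := by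
  induction n generalizing p with
  | zero => simpa using List.perm_singleton.mp hp
  | succ n ih =>
    have hrange : List.range' a (n + 1 + 1) = List.range' a (n + 1) ++ [a + (n + 1)] :=
      List.range'_1_concat
    have hlt : ∀ y ∈ List.range' a (n + 1), y < a + (n + 1) := fun y hy => by
      simp only [List.mem_range'_1] at hy
      omega
    obtain ⟨q, hq, hsort⟩ := exists_stackSort_eq_append_singleton (hrange ▸ hp) hlt
    rw [Function.iterate_succ_apply, hsort,
      stackSort_iterate_append_singleton n fun y hy => hlt y (hq.subset hy), ih hq, hrange]

end StackSort

open StackSort in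
theorem stmt_7_general (n : ℕ) (p : List ℕ) (hp : p.Perm (List.range' 1 n)) :
    stackSort^[n - 1] p = List.range' 1 n := by
  cases n with
  | zero => simpa using hp
  | succ n => exact stackSort_iterate_of_perm_range' 1 n hp

/-- For every permutation `p` of length `n ≥ 1`, applying the stack sorting map
`n - 1` times yields the identity: every permutation of length `n` is
`(n-1)`-stack sortable. -/
theorem stmt_7 (n : ℕ) (hn : 1 ≤ n) (p : List ℕ) (hp : p.Perm (List.range' 1 n)) :
    stackSort^[n - 1] p = List.range' 1 n :=
  stmt_7_general n p hp
end

section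
/- For all n ≥ 1, the sum over k = 1 to n of (n+k−1)! (2n−k)! / (k! (n+1−k)! (2k−1)! (2n−2k+1)!) (with terms where factorial arguments are negative taken to be 0) equals 2/((n+1)(2n+1)) * binomial(3n, n). -/
open Finset Nat

/-- certificate polynomial -/
noncomputable def Qp (n k : ℚ) : ℚ :=
  -2*(36 - 42*k + 12*k^2 + 96*n - 79*n*k + 14*n*k^2 + 83*n^2 - 35*n^2*k + 23*n^3)

/-- term: T a j = t(a+j+1, j+1) -/
noncomputable def Tm (a j : ℕ) : ℚ :=
  ((2*j+a+1)! * (j+2*a+1)! : ℚ) / ((j+1)! * (a+1)! * (2*j+1)! * (2*a+1)!)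

/-- WZ-style certificate function: Gc c j = H(j+c, j+1) -/
noncomputable def Gc (c j : ℕ) : ℚ :=
  (((j:ℚ)+1)*j*(2*j+1) * Qp ((j:ℚ)+c) ((j:ℚ)+1) * ((2*j+c)! * (j+2*c)! : ℚ)) /
    (((j:ℚ)+c)*((j:ℚ)+c+1) * (j+1)! * (c+1)! * (2*j+1)! * (2*c+1)!)

lemma key (a j : ℕ) :
    2*((a:ℚ)+j+3)*(2*((a:ℚ)+j)+5) * Tm (a+1) j
      - 3*(3*((a:ℚ)+j)+4)*(3*((a:ℚ)+j)+5) * Tm a j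
      = Gc a (j+1) - Gc (a+1) j := by
  have h1 : (2*j+(a+1)+1)! = (2*j+a+2) * (2*j+a+1)! := by
    rw [show 2*j+(a+1)+1 = (2*j+a+1)+1 by omega, Nat.factorial_succ]
  have h2 : (j+2*(a+1)+1)! = (j+2*a+3) * ((j+2*a+2) * (j+2*a+1)!) := by
    rw [show j+2*(a+1)+1 = (j+2*a+2)+1 by omega, Nat.factorial_succ,
        show j+2*a+2 = (j+2*a+1)+1 by omega, Nat.factorial_succ]
  have h3 : ((a+1)+1)! = (a+2) * (a+1)! := by
    rw [show (a+1)+1 = (a+1)+1 from rfl, Nat.factorial_succ]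
  have h4 : (2*(a+1)+1)! = (2*a+3) * ((2*a+2) * (2*a+1)!) := by
    rw [show 2*(a+1)+1 = (2*a+2)+1 by omega, Nat.factorial_succ,
        show 2*a+2 = (2*a+1)+1 by omega, Nat.factorial_succ]
  have h5 : (2*(j+1)+a)! = (2*j+a+2) * (2*j+a+1)! := by
    rw [show 2*(j+1)+a = (2*j+a+1)+1 by omega, Nat.factorial_succ]
  have h6 : ((j+1)+2*a)! = (j+2*a+1)! := by rw [show (j+1)+2*a = j+2*a+1 by omega]
  have h7 : ((j+1)+1)! = (j+2) * (j+1)! := by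
    rw [show (j+1)+1 = (j+1)+1 from rfl, Nat.factorial_succ]
  have h8 : (2*(j+1)+1)! = (2*j+3) * ((2*j+2) * (2*j+1)!) := by
    rw [show 2*(j+1)+1 = (2*j+2)+1 by omega, Nat.factorial_succ,
        show 2*j+2 = (2*j+1)+1 by omega, Nat.factorial_succ]
  have h9 : (2*j+(a+1))! = (2*j+a+1)! := by rw [show 2*j+(a+1) = 2*j+a+1 by omega]
  have h10 : (j+2*(a+1))! = (j+2*a+2) * (j+2*a+1)! := by
    rw [show j+2*(a+1) = (j+2*a+1)+1 by omega, Nat.factorial_succ]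
  have hA : ((2*j+a+1)! : ℚ) ≠ 0 := Nat.cast_ne_zero.mpr (Nat.factorial_ne_zero _)
  have hB : ((j+2*a+1)! : ℚ) ≠ 0 := Nat.cast_ne_zero.mpr (Nat.factorial_ne_zero _)
  have hC : ((j+1)! : ℚ) ≠ 0 := Nat.cast_ne_zero.mpr (Nat.factorial_ne_zero _)
  have hD : ((a+1)! : ℚ) ≠ 0 := Nat.cast_ne_zero.mpr (Nat.factorial_ne_zero _)
  have hE : ((2*j+1)! : ℚ) ≠ 0 := Nat.cast_ne_zero.mpr (Nat.factorial_ne_zero _)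
  have hF : ((2*a+1)! : ℚ) ≠ 0 := Nat.cast_ne_zero.mpr (Nat.factorial_ne_zero _)
  have p1 : ((j:ℚ)+1+a) ≠ 0 := by positivity
  have p2 : ((j:ℚ)+1+a+1) ≠ 0 := by positivity
  have p3 : ((j:ℚ)+(a+1)) ≠ 0 := by positivity
  have p4 : ((j:ℚ)+(a+1)+1) ≠ 0 := by positivity
  unfold Tm Gc Qp
  rw [h1, h2, h3, h4, h5, h6, h7, h8, h9, h10]
  push_cast
  field_simp
  ring

noncomputable def Ssum (n : ℕ) : ℚ := ∑ j ∈ Finset.range n, Tm (n-1-j) j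

lemma Gc_zero_right (c : ℕ) : Gc c 0 = 0 := by
  unfold Gc; push_cast; ring_nf

lemma Gc_zero_left (n : ℕ) (hn : 1 ≤ n) : Gc 0 n = -2*((n:ℚ)+2)*(2*n+3) := by
  unfold Gc Qp
  have h1 : (2*n+0)! = (2*n)! := by norm_num
  have h2 : (n+2*0)! = n ! := by norm_num
  have h3 : (n+1)! = (n+1) * n ! := Nat.factorial_succ n
  have h4 : (2*n+1)! = (2*n+1) * (2*n)! := Nat.factorial_succ _
  rw [h1, h2, h3, h4]
  have hA : ((2*n)! : ℚ) ≠ 0 := Nat.cast_ne_zero.mpr (Nat.factorial_ne_zero _)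
  have hB : ((n)! : ℚ) ≠ 0 := Nat.cast_ne_zero.mpr (Nat.factorial_ne_zero _)
  have hn' : ((n:ℚ)) ≠ 0 := by
    have : (0:ℚ) < n := by exact_mod_cast hn
    linarith
  push_cast
  norm_num [Nat.factorial]
  field_simp
  ring

lemma tele (n : ℕ) (hn : 1 ≤ n) :
    ∑ j ∈ Finset.range n,
      (2*((n:ℚ)+2)*(2*(n:ℚ)+3) * Tm (n-j) j - 3*(3*(n:ℚ)+1)*(3*(n:ℚ)+2) * Tm (n-1-j) j)
      = Gc 0 n - Gc n 0 := by
  have h := Finset.sum_range_sub (fun j => Gc (n-j) j) n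
  simp only [Nat.sub_zero, Nat.sub_self] at h
  rw [← h]
  apply Finset.sum_congr rfl
  intro j hj
  have hj' : j < n := Finset.mem_range.mp hj
  obtain ⟨a, ha⟩ : ∃ a, n = a + j + 1 := ⟨n - j - 1, by omega⟩
  have e1 : n - j = a + 1 := by omega
  have e3 : n - (j+1) = a := by omega
  have e2 : n - 1 - j = a := by omega
  rw [e1, e2, e3]
  have ecast : (n:ℚ) = (a:ℚ) + j + 1 := by
    rw [ha]; push_cast; ring
  rw [ecast]
  linear_combination key a j

lemma Tm_zero_left (n : ℕ) : Tm 0 n = 1 := by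
  unfold Tm
  rw [show 2*n+0+1 = 2*n+1 by omega, show n+2*0+1 = n+1 by omega,
      show 2*0+1 = 1 by omega]
  have hA : ((2*n+1)! : ℚ) ≠ 0 := Nat.cast_ne_zero.mpr (Nat.factorial_ne_zero _)
  have hB : ((n+1)! : ℚ) ≠ 0 := Nat.cast_ne_zero.mpr (Nat.factorial_ne_zero _)
  rw [Nat.factorial_one]
  push_cast
  field_simp

lemma recc (n : ℕ) (hn : 1 ≤ n) :
    2*((n:ℚ)+2)*(2*(n:ℚ)+3) * Ssum (n+1) = 3*(3*(n:ℚ)+1)*(3*(n:ℚ)+2) * Ssum n := by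
  have ht := tele n hn
  rw [Gc_zero_left n hn, Gc_zero_right] at ht
  rw [Finset.sum_sub_distrib, ← Finset.mul_sum, ← Finset.mul_sum] at ht
  have hS1 : Ssum (n+1) = (∑ j ∈ Finset.range n, Tm (n-j) j) + 1 := by
    unfold Ssum
    rw [Finset.sum_range_succ, show n+1-1-n = 0 by omega, Tm_zero_left]
    congr 1
  rw [hS1]
  unfold Ssum
  linear_combination ht

noncomputable def Rh (n : ℕ) : ℚ := 2 / (((n:ℚ) + 1) * (2 * (n:ℚ) + 1)) * (Nat.choose (3*n) n : ℚ)

lemma choose_cast (n : ℕ) : (Nat.choose (3*n) n : ℚ) = ((3*n)! : ℚ) / ((n)! * (2*n)!) := by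
  have h := Nat.choose_mul_factorial_mul_factorial (show n ≤ 3*n by omega)
  rw [show 3*n-n = 2*n by omega] at h
  have h' : ((3*n).choose n : ℚ) * (n)! * (2*n)! = ((3*n)! : ℚ) := by exact_mod_cast congrArg (Nat.cast : ℕ → ℚ) h
  have hB : ((n)! : ℚ) ≠ 0 := Nat.cast_ne_zero.mpr (Nat.factorial_ne_zero _)
  have hC : (((2*n))! : ℚ) ≠ 0 := Nat.cast_ne_zero.mpr (Nat.factorial_ne_zero _)
  field_simp
  linear_combination h'

lemma Rrec (n : ℕ) :
    2*((n:ℚ)+2)*(2*(n:ℚ)+3) * Rh (n+1) = 3*(3*(n:ℚ)+1)*(3*(n:ℚ)+2) * Rh n := by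
  unfold Rh
  rw [choose_cast, choose_cast]
  have e1 : (3*(n+1))! = (3*n+3)*((3*n+2)*((3*n+1)*(3*n)!)) := by
    rw [show 3*(n+1) = (3*n+2)+1 by omega, Nat.factorial_succ,
        show 3*n+2 = (3*n+1)+1 by omega, Nat.factorial_succ,
        show 3*n+1 = (3*n)+1 by omega, Nat.factorial_succ]
  have e2 : (n+1)! = (n+1)*(n)! := Nat.factorial_succ n
  have e3 : (2*(n+1))! = (2*n+2)*((2*n+1)*(2*n)!) := by
    rw [show 2*(n+1) = (2*n+1)+1 by omega, Nat.factorial_succ,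
        show 2*n+1 = (2*n)+1 by omega, Nat.factorial_succ]
  rw [e1, e2, e3]
  have hA : ((3*n)! : ℚ) ≠ 0 := Nat.cast_ne_zero.mpr (Nat.factorial_ne_zero _)
  have hB : ((n)! : ℚ) ≠ 0 := Nat.cast_ne_zero.mpr (Nat.factorial_ne_zero _)
  have hC : ((2*n)! : ℚ) ≠ 0 := Nat.cast_ne_zero.mpr (Nat.factorial_ne_zero _)
  push_cast
  field_simp
  ring

lemma Ssum_eq (n : ℕ) (hn : 1 ≤ n) : Ssum n = Rh n := by
  induction n, hn using Nat.le_induction with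
  | base =>
    unfold Ssum Rh
    rw [Finset.sum_range_one]
    norm_num [Tm, Nat.factorial, Nat.choose]
  | succ n hn ih =>
    have hr := recc n hn
    rw [ih] at hr
    have hr2 := (Rrec n).symm
    have hc : (2*((n:ℚ)+2)*(2*(n:ℚ)+3)) ≠ 0 := by positivity
    exact mul_left_cancel₀ hc (hr.trans hr2)

/-- The arithmetic identity behind West's formula: for all `n ≥ 1`,
`∑_{k=1}^{n} (n+k−1)!(2n−k)!/(k!(n+1−k)!(2k−1)!(2n−2k+1)!)
  = (2/((n+1)(2n+1))) · C(3n, n)`. -/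
theorem stmt_8 (n : ℕ) (hn : 1 ≤ n) :
    ∑ k ∈ Finset.Icc 1 n,
        (((n + k - 1)! * (2 * n - k)! : ℚ) /
          ((k)! * (n + 1 - k)! * (2 * k - 1)! * (2 * n - 2 * k + 1)!))
      = 2 / ((n + 1) * (2 * n + 1)) * (Nat.choose (3 * n) n : ℚ) := by
  have hmain : Ssum n = Rh n := Ssum_eq n hn
  have hL : (∑ k ∈ Finset.Icc 1 n,
        (((n + k - 1)! * (2 * n - k)! : ℚ) /
          ((k)! * (n + 1 - k)! * (2 * k - 1)! * (2 * n - 2 * k + 1)!))) = Ssum n := by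
    unfold Ssum Tm
    rw [← Finset.Ico_add_one_right_eq_Icc, Finset.sum_Ico_eq_sum_range]
    simp only [show n+1-1 = n from rfl]
    apply Finset.sum_congr rfl
    intro j hj
    have hj' : j < n := Finset.mem_range.mp hj
    rw [show n + (1+j) - 1 = 2*j+(n-1-j)+1 by omega,
        show 2*n - (1+j) = j+2*(n-1-j)+1 by omega,
        show n+1-(1+j) = (n-1-j)+1 by omega,
        show 2*(1+j)-1 = 2*j+1 by omega,
        show 2*n-2*(1+j)+1 = 2*(n-1-j)+1 by omega,
        show (1+j) = j+1 by omega]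
  rw [hL, hmain]
  unfold Rh
  rfl
end

section
/- Let g(x) = (1+x)·(2−x)^{2−x}·x^{−3x}·(1−x)^{x−1}·(1−2x)^{2x−1}·((x+1)/4)^x for x ∈ (0, 1/2). Then g attains its maximum on (0,1/2) at x₀ = (1/12)(27 + 12√417)^{1/3} − 13/(4(27 + 12√417)^{1/3}) + 1/4, and g(x₀) < 12.533. -/
open Real

noncomputable def g (x : ℝ) : ℝ :=
  (1 + x) * (2 - x) ^ (2 - x) * x ^ (-3 * x) * (1 - x) ^ (x - 1) *
    (1 - 2 * x) ^ (2 * x - 1) * ((x + 1) / 4) ^ x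

noncomputable def x₀ : ℝ :=
  (1 / 12) * (27 + 12 * Real.sqrt 417) ^ ((1 : ℝ) / 3) -
    13 / (4 * (27 + 12 * Real.sqrt 417) ^ ((1 : ℝ) / 3)) + 1 / 4

/-!
On `(0, 1/2)` we have `g = exp ∘ logG`, and `logG' = log N - log D` with
`N = (1 - x)(1 - 2x)²(x + 1)/4` and `D = x³(2 - x)`. Since `4 (D - N) = 4x³ - 3x² + 4x - 1` is a
strictly increasing cubic whose real root is Cardano's `x₀`, `logG` increases up to `x₀` and
decreases after it. The identity `logG = x logG' + log ((1 + x)(2 - x)² / ((1 - x)(1 - 2x)))`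
turns the value at the critical point into a rational expression in `x₀`, which is `≈ 12.53295`;
the bound then needs `x₀` only to six decimals.
-/

open Set

lemma cubic_x₀ : 4 * x₀ ^ 3 - 3 * x₀ ^ 2 + 4 * x₀ - 1 = 0 := by
  have hs : √417 ^ 2 = 417 := sq_sqrt (by norm_num)
  have hpos : (0 : ℝ) < 27 + 12 * √417 := by positivity
  set t := (27 + 12 * √417) ^ ((1 : ℝ) / 3) with ht_def
  have ht : t ^ 3 = 27 + 12 * √417 := by
    rw [← rpow_natCast, ← rpow_mul hpos.le]
    norm_num
  have ht0 : t ≠ 0 := (rpow_pos_of_pos hpos _).ne'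
  rw [x₀, ← ht_def]
  field_simp
  linear_combination (64 * t ^ 3 + 768 * √417 - 1728) * ht + 9216 * hs

lemma strictMono_cubic : StrictMono fun x : ℝ ↦ 4 * x ^ 3 - 3 * x ^ 2 + 4 * x - 1 := by
  intro u v huv
  nlinarith [sq_nonneg (u - v), sq_nonneg (u + v), sq_nonneg (2 * (u + v) - 1)]

lemma cubic_neg_iff_lt_x₀ {x : ℝ} : 4 * x ^ 3 - 3 * x ^ 2 + 4 * x - 1 < 0 ↔ x < x₀ := by
  rw [← strictMono_cubic.lt_iff_lt (b := x₀)]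
  simp only [cubic_x₀]

lemma cubic_pos_iff_x₀_lt {x : ℝ} : 0 < 4 * x ^ 3 - 3 * x ^ 2 + 4 * x - 1 ↔ x₀ < x := by
  rw [← strictMono_cubic.lt_iff_lt (a := x₀)]
  simp only [cubic_x₀]

lemma x₀_pos : 0 < x₀ := cubic_neg_iff_lt_x₀.mp (by norm_num)

lemma x₀_lt_bound : x₀ < 0.288392 := cubic_pos_iff_x₀_lt.mp (by norm_num)

lemma x₀_mem : x₀ ∈ Ioo (0 : ℝ) (1 / 2) := ⟨x₀_pos, x₀_lt_bound.trans (by norm_num)⟩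

noncomputable def logG (x : ℝ) : ℝ :=
  log (1 + x) + (2 - x) * log (2 - x) - 3 * (x * log x) - (1 - x) * log (1 - x) -
    (1 - 2 * x) * log (1 - 2 * x) + x * log ((x + 1) / 4)

noncomputable def logGDeriv (x : ℝ) : ℝ :=
  log (1 - x) + 2 * log (1 - 2 * x) + log ((x + 1) / 4) - 3 * log x - log (2 - x)

lemma g_eq_exp_logG {x : ℝ} (hx : x ∈ Ioo (0 : ℝ) (1 / 2)) : g x = exp (logG x) := by
  obtain ⟨h0, h1⟩ := hx
  rw [g, rpow_def_of_pos (by linarith), rpow_def_of_pos h0, rpow_def_of_pos (by linarith),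
    rpow_def_of_pos (by linarith), rpow_def_of_pos (by linarith),
    ← exp_log (by linarith : 0 < 1 + x)]
  simp only [← exp_add, logG]
  ring_nf

lemma HasDerivAt.mul_log {f : ℝ → ℝ} {f' x : ℝ} (hf : HasDerivAt f f' x) (hx : f x ≠ 0) :
    HasDerivAt (fun y ↦ f y * Real.log (f y)) ((Real.log (f x) + 1) * f') x :=
  (hasDerivAt_mul_log hx).comp x hf

lemma hasDerivAt_logG {x : ℝ} (hx : x ∈ Ioo (0 : ℝ) (1 / 2)) :
    HasDerivAt logG (logGDeriv x) x := by
  obtain ⟨h0, h1⟩ := hx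
  have hid := hasDerivAt_id' x
  have h2x := (hid.const_mul 2).const_sub 1
  have := ((((((hid.const_add 1).log (by linarith)).add
    (HasDerivAt.mul_log (hid.const_sub 2) (by linarith))).sub
    ((HasDerivAt.mul_log hid h0.ne').const_mul 3)).sub
    (HasDerivAt.mul_log (hid.const_sub 1) (by linarith))).sub
    (HasDerivAt.mul_log h2x (by linarith))).add
    (hid.mul ((hid.add_const 1).div_const 4 |>.log (by linarith)))
  refine this.congr_deriv ?_
  simp only [logGDeriv]
  field_simp
  ring

lemma logGDeriv_eq {x : ℝ} (hx : x ∈ Ioo (0 : ℝ) (1 / 2)) :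
    logGDeriv x = log ((1 - x) * (1 - 2 * x) ^ 2 * ((x + 1) / 4)) - log (x ^ 3 * (2 - x)) := by
  obtain ⟨h0, h1⟩ := hx
  have h1x : 1 - x ≠ 0 := by linarith
  have h12x : (1 - 2 * x) ^ 2 ≠ 0 := pow_ne_zero _ (by linarith)
  rw [log_mul (mul_ne_zero h1x h12x) (by linarith), log_mul h1x h12x,
    log_mul (by positivity) (by linarith), log_pow, log_pow, logGDeriv]
  push_cast
  ring

lemma logGDeriv_numerator_sub_denominator (x : ℝ) :
    (1 - x) * (1 - 2 * x) ^ 2 * ((x + 1) / 4) - x ^ 3 * (2 - x) =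
      -(4 * x ^ 3 - 3 * x ^ 2 + 4 * x - 1) / 4 := by
  ring

lemma logGDeriv_nonneg {x : ℝ} (hx : x ∈ Ioo 0 x₀) : 0 ≤ logGDeriv x := by
  obtain ⟨h0, h1⟩ : x ∈ Ioo (0 : ℝ) (1 / 2) := ⟨hx.1, hx.2.trans x₀_mem.2⟩
  have := logGDeriv_numerator_sub_denominator x
  have := cubic_neg_iff_lt_x₀.mpr hx.2
  rw [logGDeriv_eq ⟨h0, h1⟩, sub_nonneg]
  exact log_le_log (mul_pos (pow_pos h0 3) (by linarith)) (by linarith)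

lemma logGDeriv_nonpos {x : ℝ} (hx : x ∈ Ioo x₀ (1 / 2)) : logGDeriv x ≤ 0 := by
  obtain ⟨h0, h1⟩ : x ∈ Ioo (0 : ℝ) (1 / 2) := ⟨x₀_pos.trans hx.1, hx.2⟩
  have := logGDeriv_numerator_sub_denominator x
  have := cubic_pos_iff_x₀_lt.mpr hx.1
  have hN : 0 < (1 - x) * (1 - 2 * x) ^ 2 * ((x + 1) / 4) :=
    mul_pos (mul_pos (by linarith) (pow_pos (by linarith) 2)) (by linarith)
  rw [logGDeriv_eq ⟨h0, h1⟩, sub_nonpos]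
  exact log_le_log hN (by linarith)

lemma logGDeriv_x₀ : logGDeriv x₀ = 0 := by
  rw [logGDeriv_eq x₀_mem, sub_eq_zero]
  congr 1
  linear_combination logGDeriv_numerator_sub_denominator x₀ - cubic_x₀ / 4

lemma isMaxOn_logG : IsMaxOn logG (Ioo 0 (1 / 2)) x₀ := by
  have hderiv {x : ℝ} (hx : x ∈ Ioo (0 : ℝ) (1 / 2)) : deriv logG x = logGDeriv x :=
    (hasDerivAt_logG hx).deriv
  have hdiff : DifferentiableOn ℝ logG (Ioo 0 (1 / 2)) := fun x hx ↦
    (hasDerivAt_logG hx).differentiableAt.differentiableWithinAt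
  refine isMaxOn_Ioo_of_deriv (hasDerivAt_logG x₀_mem).continuousAt
    (hdiff.mono (Ioo_subset_Ioo_right x₀_mem.2.le))
    (hdiff.mono (Ioo_subset_Ioo_left x₀_mem.1.le)) (fun x hx ↦ ?_) (fun x hx ↦ ?_)
  · rw [hderiv ⟨hx.1, hx.2.trans x₀_mem.2⟩]
    exact logGDeriv_nonneg hx
  · rw [hderiv ⟨x₀_pos.trans hx.1, hx.2⟩]
    exact logGDeriv_nonpos hx

lemma logG_eq (x : ℝ) :
    logG x = x * logGDeriv x + log (1 + x) + 2 * log (2 - x) - log (1 - x) - log (1 - 2 * x) := by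
  rw [logG, logGDeriv]
  ring

lemma g_x₀ : g x₀ = (1 + x₀) * (2 - x₀) ^ 2 / ((1 - x₀) * (1 - 2 * x₀)) := by
  obtain ⟨h0, h1⟩ := x₀_mem
  have hA : 0 < (1 + x₀) * (2 - x₀) ^ 2 := mul_pos (by linarith) (pow_pos (by linarith) 2)
  have hB : 0 < (1 - x₀) * (1 - 2 * x₀) := mul_pos (by linarith) (by linarith)
  rw [g_eq_exp_logG x₀_mem, logG_eq, logGDeriv_x₀, mul_zero, zero_add,
    show 2 * log (2 - x₀) = log ((2 - x₀) ^ 2) by rw [log_pow]; norm_num,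
    ← log_mul (by linarith) (pow_pos (by linarith) 2).ne', sub_sub,
    ← log_mul (by linarith) (by linarith), ← log_div hA.ne' hB.ne']
  exact exp_log (div_pos hA hB)

lemma g_x₀_lt : g x₀ < 12.533 := by
  have h0 := x₀_pos
  have h1 := x₀_lt_bound
  rw [g_x₀, div_lt_iff₀ (mul_pos (by linarith) (by linarith))]
  nlinarith [mul_pos h0 h0, mul_pos (sub_pos.mpr h1) h0]

/-- `g` attains its maximum on `(0, 1/2)` at `x₀`, and `g(x₀) < 12.533`. -/
theorem stmt_11 :
    x₀ ∈ Set.Ioo (0 : ℝ) (1 / 2) ∧ IsMaxOn g (Set.Ioo (0 : ℝ) (1 / 2)) x₀ ∧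
      g x₀ < 12.533 := by
  refine ⟨x₀_mem, fun x hx ↦ ?_, g_x₀_lt⟩
  show g x ≤ g x₀
  rw [g_eq_exp_logG hx, g_eq_exp_logG x₀_mem]
  exact exp_le_exp.mpr (isMaxOn_logG hx)
end

section
/- For x = k/n fixed in (0, 1/2), the n-th root of the summand f(n,k) = (n+k−1)!(2n−k)!/(k!(n+1−k)!(2k−1)!(2n−2k+1)!) · binomial(2n−2k, n−1) converges as n → ∞ (with k = ⌊xn⌋) to g(x) = (1+x)(2−x)^{2−x} x^{−3x} (1−x)^{x−1} (1−2x)^{2x−1} ((x+1)/4)^x. -/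
open Real Nat Filter

/-- The `k`-th summand in the upper bound for `W_3(n)`. -/
noncomputable def f (n k : ℕ) : ℝ :=
  ((n + k - 1)! * (2 * n - k)! : ℝ) /
      ((k)! * (n + 1 - k)! * (2 * k - 1)! * (2 * n - 2 * k + 1)!) *
    (Nat.choose (2 * n - 2 * k) (n - 1) : ℝ)

/-! Stirling's formula gives `log m! = m log m - m + O(log m)`, so whenever `mₙ / n → c > 0`,
`(log mₙ! - mₙ log n) / n → c log c - c`. For `k = ⌊xn⌋` and large `n`, `f(n,k)` is a
quotient of three factorials by six, all with arguments affine in `n` and `k`, and the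
arguments on the two sides add up to the same total up to `2`. Hence `(log f(n,k)) / n` is
the signed sum of the corresponding `c log c - c` plus `O(log n / n)`, and that sum equals
`log g(x)`. -/

open Topology

lemma tendsto_log_factorial_sub_div {a : ℕ → ℕ} {c : ℝ} (hc : 0 < c)
    (ha : Tendsto (fun n => (a n : ℝ) / n) atTop (𝓝 c)) :
    Tendsto (fun n : ℕ => (Real.log (a n)! - a n * Real.log n) / n) atTop
      (𝓝 (c * Real.log c - c)) := by
  have ha_top : Tendsto (fun n => (a n : ℝ)) atTop atTop := by
    refine (ha.pos_mul_atTop hc tendsto_natCast_atTop_atTop).congr' ?_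
    filter_upwards [eventually_ne_atTop 0] with n hn
    field_simp
  have hstirling :
      Tendsto (fun n : ℕ => Real.log (Stirling.stirlingSeq (a n)) / n) atTop (𝓝 0) :=
    ((continuousAt_log (by positivity)).tendsto.comp (Stirling.tendsto_stirlingSeq_sqrt_pi.comp
      (tendsto_natCast_atTop_iff.mp ha_top))).div_atTop tendsto_natCast_atTop_atTop
  have hlog_two_mul : Tendsto (fun n : ℕ => Real.log (2 * a n) / n) atTop (𝓝 0) := by
    have h := (isLittleO_log_id_atTop.tendsto_div_nhds_zero.comp
      (ha_top.const_mul_atTop two_pos)).mul (ha.const_mul 2)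
    rw [zero_mul] at h
    refine h.congr' ?_
    filter_upwards [ha_top.eventually_gt_atTop 0] with n hn
    simp only [Function.comp, id]
    field_simp
  have hmain := (ha.mul ((continuousAt_log hc.ne').tendsto.comp ha)).sub ha
  have h := (hstirling.add (hlog_two_mul.const_mul (1 / 2))).add hmain
  rw [mul_zero, zero_add, zero_add] at h
  refine h.congr' ?_
  filter_upwards [ha_top.eventually_gt_atTop 0, eventually_gt_atTop 0] with n hm hn
  have hn' : (0 : ℝ) < n := by exact_mod_cast hn
  simp only [Function.comp]
  rw [Stirling.log_stirlingSeq_formula, log_div hm.ne' (exp_ne_zero 1), log_exp,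
    log_div hm.ne' hn'.ne']
  field_simp
  ring

lemma tendsto_natCast_div_of_affine {k a : ℕ → ℕ} {x : ℝ} {α β γ : ℤ}
    (hk : Tendsto (fun n => (k n : ℝ) / n) atTop (𝓝 x))
    (ha : ∀ᶠ n in atTop, (a n : ℤ) = α * n + β * k n + γ) :
    Tendsto (fun n => (a n : ℝ) / n) atTop (𝓝 (α + β * x)) := by
  have h := (tendsto_const_nhds (x := (α : ℝ))).add (hk.const_mul (β : ℝ)) |>.add
    (tendsto_one_div_atTop_nhds_zero_nat.const_mul (γ : ℝ))
  rw [mul_zero, add_zero] at h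
  refine h.congr' ?_
  filter_upwards [ha, eventually_ne_atTop 0] with n han hn
  rw [show (a n : ℝ) = α * n + β * k n + γ by exact_mod_cast han]
  field_simp

lemma eventually_pos_and_two_mul_lt {k : ℕ → ℕ} {x : ℝ} (hx : x ∈ Set.Ioo (0 : ℝ) (1 / 2))
    (hk : Tendsto (fun n => (k n : ℝ) / n) atTop (𝓝 x)) :
    ∀ᶠ n in atTop, 0 < k n ∧ 2 * k n < n := by
  filter_upwards [hk.eventually (Ioo_mem_nhds hx.1 hx.2), eventually_gt_atTop 0]
    with n ⟨hpos, hlt⟩ hn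
  have hn' : (0 : ℝ) < n := by exact_mod_cast hn
  rw [div_pos_iff_of_pos_right hn'] at hpos
  rw [div_lt_iff₀ hn'] at hlt
  constructor
  · exact_mod_cast hpos
  · exact_mod_cast (by linarith : (2 * k n : ℝ) < n)

lemma f_pos {n k : ℕ} (h : 2 * k ≤ n + 1) : 0 < f n k :=
  mul_pos (by positivity) (Nat.cast_pos.mpr (Nat.choose_pos (by omega)))

lemma log_f_eq {n k : ℕ} (h : 2 * k ≤ n + 1) :
    Real.log (f n k) =
      Real.log (n + k - 1)! + Real.log (2 * n - k)! + Real.log (2 * n - 2 * k)! -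
        (Real.log k ! + Real.log (n + 1 - k)! + Real.log (2 * k - 1)! +
          Real.log (2 * n - 2 * k + 1)! + Real.log (n - 1)! +
          Real.log (2 * n - 2 * k - (n - 1))!) := by
  rw [f, Nat.cast_choose ℝ (by omega)]
  simp only [ne_eq, div_eq_zero_iff, _root_.mul_eq_zero, cast_eq_zero, factorial_ne_zero, or_self,
    not_false_eq_true, Real.log_mul, Real.log_div]
  ring

lemma g_pos {x : ℝ} (hx : x ∈ Set.Ioo (0 : ℝ) (1 / 2)) : 0 < g x := by
  obtain ⟨h0, h1⟩ := hx
  have := rpow_pos_of_pos (by linarith : (0 : ℝ) < 2 - x) (2 - x)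
  have := rpow_pos_of_pos h0 (-3 * x)
  have := rpow_pos_of_pos (by linarith : (0 : ℝ) < 1 - x) (x - 1)
  have := rpow_pos_of_pos (by linarith : (0 : ℝ) < 1 - 2 * x) (2 * x - 1)
  have := rpow_pos_of_pos (by linarith : (0 : ℝ) < (x + 1) / 4) x
  have : 0 < 1 + x := by linarith
  unfold g
  positivity

lemma log_g_eq {x : ℝ} (hx : x ∈ Set.Ioo (0 : ℝ) (1 / 2)) :
    Real.log (g x) = (1 + x) * Real.log (1 + x) + (2 - x) * Real.log (2 - x) -
      x * Real.log x - (1 - x) * Real.log (1 - x) - 2 * x * Real.log (2 * x) -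
      (1 - 2 * x) * Real.log (1 - 2 * x) := by
  obtain ⟨h0, h1⟩ := hx
  have h2 : (0 : ℝ) < 2 - x := by linarith
  have h3 : (0 : ℝ) < 1 - x := by linarith
  have h4 : (0 : ℝ) < 1 - 2 * x := by linarith
  have h5 : (0 : ℝ) < 1 + x := by linarith
  have h6 : (0 : ℝ) < (x + 1) / 4 := by linarith
  unfold g
  rw [log_mul (by positivity) (by positivity), log_mul (by positivity) (by positivity),
    log_mul (by positivity) (by positivity), log_mul (by positivity) (by positivity),
    log_mul (by positivity) (by positivity), log_rpow h2, log_rpow h0, log_rpow h3, log_rpow h4,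
    log_rpow h6, log_div (by positivity) four_ne_zero, log_mul two_ne_zero h0.ne',
    show (4 : ℝ) = 2 ^ 2 by norm_num, Real.log_pow, add_comm x 1]
  push_cast
  ring

lemma tendsto_rpow_one_div_of_tendsto_log_div {u : ℕ → ℝ} {l : ℝ} (hl : 0 < l)
    (hu : ∀ᶠ n in atTop, 0 < u n)
    (h : Tendsto (fun n : ℕ => Real.log (u n) / n) atTop (𝓝 (Real.log l))) :
    Tendsto (fun n : ℕ => u n ^ ((1 : ℝ) / n)) atTop (𝓝 l) := by
  have h' := (continuous_exp.tendsto _).comp h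
  rw [Function.comp_def, exp_log hl] at h'
  refine h'.congr' ?_
  filter_upwards [hu] with n hn
  rw [rpow_def_of_pos hn, mul_one_div]

lemma tendsto_log_f_div {k : ℕ → ℕ} {x : ℝ} (hx : x ∈ Set.Ioo (0 : ℝ) (1 / 2))
    (hk : Tendsto (fun n => (k n : ℝ) / n) atTop (𝓝 x)) :
    Tendsto (fun n : ℕ => Real.log (f n (k n)) / n) atTop (𝓝 (Real.log (g x))) := by
  obtain ⟨h0, h1⟩ := hx
  have hev := eventually_pos_and_two_mul_lt ⟨h0, h1⟩ hk
  have hlim : ∀ (a : ℕ → ℕ) (α β γ : ℤ) (c : ℝ),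
      (∀ᶠ n in atTop, (a n : ℤ) = α * n + β * k n + γ) → (α + β * x : ℝ) = c → 0 < c →
      Tendsto (fun n : ℕ => (Real.log (a n)! - a n * Real.log n) / n) atTop
        (𝓝 (c * Real.log c - c)) :=
    fun _ _ _ _ _ ha hc hc0 =>
      tendsto_log_factorial_sub_div hc0 (hc ▸ tendsto_natCast_div_of_affine hk ha)
  have hA₁ := hlim (fun n => n + k n - 1) 1 1 (-1) (1 + x)
    (by filter_upwards [hev] with n hn; omega) (by push_cast; ring) (by linarith)
  have hA₂ := hlim (fun n => 2 * n - k n) 2 (-1) 0 (2 - x)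
    (by filter_upwards [hev] with n hn; omega) (by push_cast; ring) (by linarith)
  have hA₃ := hlim (fun n => 2 * n - 2 * k n) 2 (-2) 0 (2 - 2 * x)
    (by filter_upwards [hev] with n hn; omega) (by push_cast; ring) (by linarith)
  have hB₁ := hlim k 0 1 0 x
    (by filter_upwards [hev] with n hn; omega) (by push_cast; ring) h0
  have hB₂ := hlim (fun n => n + 1 - k n) 1 (-1) 1 (1 - x)
    (by filter_upwards [hev] with n hn; omega) (by push_cast; ring) (by linarith)
  have hB₃ := hlim (fun n => 2 * k n - 1) 0 2 (-1) (2 * x)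
    (by filter_upwards [hev] with n hn; omega) (by push_cast; ring) (by linarith)
  have hB₄ := hlim (fun n => 2 * n - 2 * k n + 1) 2 (-2) 1 (2 - 2 * x)
    (by filter_upwards [hev] with n hn; omega) (by push_cast; ring) (by linarith)
  have hB₅ := hlim (fun n => n - 1) 1 0 (-1) 1
    (by filter_upwards [hev] with n hn; omega) (by push_cast; ring) one_pos
  have hB₆ := hlim (fun n => 2 * n - 2 * k n - (n - 1)) 1 (-2) 1 (1 - 2 * x)
    (by filter_upwards [hev] with n hn; omega) (by push_cast; ring) (by linarith)
  have hlog := isLittleO_log_id_atTop.tendsto_div_nhds_zero.comp tendsto_natCast_atTop_atTop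
  have h := ((((((((hA₁.add hA₂).add hA₃).sub hB₁).sub hB₂).sub hB₃).sub hB₄).sub hB₅).sub
    hB₆).sub (hlog.const_mul 2)
  convert h.congr' ?_ using 2
  · rw [log_g_eq ⟨h0, h1⟩, log_one]
    ring
  · filter_upwards [hev] with n hn
    have hsum : (n + k n - 1) + (2 * n - k n) + (2 * n - 2 * k n) + 2 =
        k n + (n + 1 - k n) + (2 * k n - 1) + (2 * n - 2 * k n + 1) + (n - 1) +
          (2 * n - 2 * k n - (n - 1)) := by omega
    have hsum' := congrArg (Nat.cast : ℕ → ℝ) hsum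
    rw [log_f_eq (by omega)]
    simp only [Function.comp, id]
    push_cast at hsum' ⊢
    linear_combination (-Real.log n / n) * hsum'

/-- For fixed `x ∈ (0, 1/2)`, with `k = ⌊xn⌋`, the `n`-th root of the summand
`f(n,k)` converges to `g(x)` as `n → ∞`. -/
theorem stmt_13 (x : ℝ) (hx : x ∈ Set.Ioo (0 : ℝ) (1 / 2)) :
    Tendsto (fun n : ℕ => (f n ⌊x * n⌋₊) ^ ((1 : ℝ) / n)) atTop (nhds (g x)) := by
  have hk : Tendsto (fun n : ℕ => (⌊x * n⌋₊ : ℝ) / n) atTop (𝓝 x) :=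
    (tendsto_nat_floor_mul_div_atTop hx.1.le).comp tendsto_natCast_atTop_atTop
  refine tendsto_rpow_one_div_of_tendsto_log_div (g_pos hx) ?_ (tendsto_log_f_div hx hk)
  filter_upwards [eventually_pos_and_two_mul_lt hx hk] with n hn
  exact f_pos (by omega)
end
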